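/- arXiv:2303.09816 — 4 statements merged into one kernel-verified Lean document; each statement's English description precedes it below -/
import Mathlib

section
/- Let χ be a bounded real random variable with E(χ) = 0, E(χ²) > 0, and P(χ > 0) > 0, and let C₀ > 0. For every sufficiently small λ > 0 there exists a unique ρ̃ < 0 solving E(exp(C₀ρ̃(χ + λ))) = 1, and ρ̃ = −(2/(C₀E(χ²)))·λ + O(λ²) as λ → 0. -/
open MeasureTheory ProbabilityTheory Real


section Aux
variable {Ω : Type*} [MeasurableSpace Ω] {μ : Measure Ω} [IsProbabilityMeasure μ] {χ : Ω → ℝ}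

lemma aux_int_exp (hmeas : Measurable χ) (hbdd : ∀ᵐ ω ∂μ, |χ ω| ≤ 1) (b l : ℝ) :
    Integrable (fun ω => Real.exp (b * (χ ω + l))) μ := by
  refine Integrable.mono' (integrable_const (Real.exp (|b| * (1 + |l|)))) ?_ ?_
  · exact (Real.measurable_exp.comp ((hmeas.add_const l).const_mul b)).aestronglyMeasurable
  · filter_upwards [hbdd] with ω hω
    rw [Real.norm_eq_abs, Real.abs_exp, Real.exp_le_exp]
    have h1 : b * (χ ω + l) ≤ |b| * |χ ω + l| := by
      calc b * (χ ω + l) ≤ |b * (χ ω + l)| := le_abs_self _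
        _ = |b| * |χ ω + l| := abs_mul _ _
    have h2 : |χ ω + l| ≤ 1 + |l| := (abs_add_le _ _).trans (by linarith)
    nlinarith [abs_nonneg b]

lemma aux_int_chi (hmeas : Measurable χ) (hbdd : ∀ᵐ ω ∂μ, |χ ω| ≤ 1) :
    Integrable χ μ := by
  refine Integrable.mono' (integrable_const 1) hmeas.aestronglyMeasurable ?_
  filter_upwards [hbdd] with ω hω
  rwa [Real.norm_eq_abs]

lemma aux_int_sq (hmeas : Measurable χ) (hbdd : ∀ᵐ ω ∂μ, |χ ω| ≤ 1) (l : ℝ) :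
    Integrable (fun ω => (χ ω + l) ^ 2) μ := by
  refine Integrable.mono' (integrable_const ((1 + |l|) ^ 2)) ?_ ?_
  · exact ((hmeas.add_const l).pow_const 2).aestronglyMeasurable
  · filter_upwards [hbdd] with ω hω
    rw [Real.norm_eq_abs, abs_pow]
    have h2 : |χ ω + l| ≤ 1 + |l| := (abs_add_le _ _).trans (by linarith)
    exact pow_le_pow_left₀ (abs_nonneg _) h2 2

lemma aux_int_sq0 (hmeas : Measurable χ) (hbdd : ∀ᵐ ω ∂μ, |χ ω| ≤ 1) :
    Integrable (fun ω => (χ ω) ^ 2) μ := by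
  simpa using aux_int_sq hmeas hbdd 0

lemma aux_second_moment (hmeas : Measurable χ) (hbdd : ∀ᵐ ω ∂μ, |χ ω| ≤ 1)
    (hmean : ∫ ω, χ ω ∂μ = 0) (l : ℝ) :
    ∫ ω, (χ ω + l) ^ 2 ∂μ = (∫ ω, (χ ω) ^ 2 ∂μ) + l ^ 2 := by
  have e : (fun ω => (χ ω + l) ^ 2) = fun ω => (χ ω) ^ 2 + ((2 * l) * χ ω + l ^ 2) := by
    funext ω; ring
  have h1 : Integrable (fun ω => (2 * l) * χ ω + l ^ 2) μ := by
    exact ((aux_int_chi hmeas hbdd).const_mul (2 * l)).add (integrable_const (l ^ 2))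
  have h2 : Integrable (fun ω => (2 * l) * χ ω) μ := (aux_int_chi hmeas hbdd).const_mul (2 * l)
  rw [e, integral_add (aux_int_sq0 hmeas hbdd) h1, integral_add h2 (integrable_const (l ^ 2)),
    MeasureTheory.integral_const_mul, hmean, integral_const]
  simp

end Aux

section Aux2
variable {Ω : Type*} [MeasurableSpace Ω] {μ : Measure Ω} [IsProbabilityMeasure μ] {χ : Ω → ℝ}

example (x : ℝ) : ∑ m ∈ Finset.range 3, x ^ m / m.factorial = 1 + x + x ^ 2 / 2 := by
  simp [Finset.sum_range_succ, Nat.factorial]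

lemma aux_taylor (hmeas : Measurable χ) (hbdd : ∀ᵐ ω ∂μ, |χ ω| ≤ 1)
    (hmean : ∫ ω, χ ω ∂μ = 0) (b l : ℝ) (hl : 0 ≤ l) (hb : |b| * (1 + l) ≤ 1) :
    |(∫ ω, Real.exp (b * (χ ω + l)) ∂μ) -
      (1 + b * l + b ^ 2 * ((∫ ω, (χ ω) ^ 2 ∂μ) + l ^ 2) / 2)| ≤
      2 / 9 * (|b| * (1 + l)) ^ 3 := by
  have hintP : Integrable (fun ω => 1 + b * l + b * χ ω + b ^ 2 / 2 * (χ ω + l) ^ 2) μ := by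
    exact ((integrable_const (1 + b * l)).add ((aux_int_chi hmeas hbdd).const_mul b)).add
      ((aux_int_sq hmeas hbdd l).const_mul (b ^ 2 / 2))
  have hPval : ∫ ω, (1 + b * l + b * χ ω + b ^ 2 / 2 * (χ ω + l) ^ 2) ∂μ
      = 1 + b * l + b ^ 2 * ((∫ ω, (χ ω) ^ 2 ∂μ) + l ^ 2) / 2 := by
    have h1 : Integrable (fun ω => 1 + b * l + b * χ ω) μ :=
      (integrable_const (1 + b * l)).add ((aux_int_chi hmeas hbdd).const_mul b)
    rw [integral_add h1 ((aux_int_sq hmeas hbdd l).const_mul (b ^ 2 / 2)),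
      integral_add (integrable_const (1 + b * l)) ((aux_int_chi hmeas hbdd).const_mul b),
      MeasureTheory.integral_const_mul, MeasureTheory.integral_const_mul, hmean,
      aux_second_moment hmeas hbdd hmean l, integral_const]
    simp; ring
  rw [← hPval, ← integral_sub (aux_int_exp hmeas hbdd b l) hintP]
  have hbnd : ∀ᵐ ω ∂μ, ‖Real.exp (b * (χ ω + l)) -
      (1 + b * l + b * χ ω + b ^ 2 / 2 * (χ ω + l) ^ 2)‖ ≤ 2 / 9 * (|b| * (1 + l)) ^ 3 := by
    filter_upwards [hbdd] with ω hω
    set x := b * (χ ω + l) with hx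
    have hxa : |x| ≤ |b| * (1 + l) := by
      rw [hx, abs_mul]
      have h2 : |χ ω + l| ≤ 1 + l := (abs_add_le _ _).trans (by rw [abs_of_nonneg hl]; linarith)
      exact mul_le_mul_of_nonneg_left h2 (abs_nonneg b)
    have hx1 : |x| ≤ 1 := hxa.trans hb
    have h3 := Real.exp_bound hx1 (n := 3) (by norm_num)
    have hs : ∑ m ∈ Finset.range 3, x ^ m / m.factorial = 1 + x + x ^ 2 / 2 := by
      simp [Finset.sum_range_succ, Nat.factorial]
    rw [hs] at h3
    have he : 1 + x + x ^ 2 / 2 = 1 + b * l + b * χ ω + b ^ 2 / 2 * (χ ω + l) ^ 2 := by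
      rw [hx]; ring
    rw [he] at h3
    rw [Real.norm_eq_abs]
    calc |Real.exp (b * (χ ω + l)) - (1 + b * l + b * χ ω + b ^ 2 / 2 * (χ ω + l) ^ 2)|
        ≤ |x| ^ 3 * (↑(3:ℕ).succ / (↑(3:ℕ).factorial * ↑(3:ℕ))) := h3
      _ ≤ 2 / 9 * (|b| * (1 + l)) ^ 3 := by
          have := pow_le_pow_left₀ (abs_nonneg x) hxa 3
          norm_num [Nat.factorial]
          nlinarith [this]
  have := norm_integral_le_of_norm_le_const (μ := μ) hbnd
  simpa [Real.norm_eq_abs, measure_univ] using this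

end Aux2
section Aux3
variable {Ω : Type*} [MeasurableSpace Ω] {μ : Measure Ω} [IsProbabilityMeasure μ] {χ : Ω → ℝ}

lemma aux_cont (hmeas : Measurable χ) (hbdd : ∀ᵐ ω ∂μ, |χ ω| ≤ 1) (a l : ℝ) (hl : 0 ≤ l) :
    Continuous fun ρ : ℝ => ∫ ω, Real.exp (a * ρ * (χ ω + l)) ∂μ := by
  rw [continuous_iff_continuousAt]
  intro ρ₀
  apply MeasureTheory.continuousAt_of_dominated
    (bound := fun _ => Real.exp (|a| * (|ρ₀| + 1) * (1 + l)))
  · exact Filter.Eventually.of_forall fun ρ =>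
      (Real.measurable_exp.comp ((hmeas.add_const l).const_mul (a * ρ))).aestronglyMeasurable
  · filter_upwards [Metric.ball_mem_nhds ρ₀ one_pos] with ρ hρ
    filter_upwards [hbdd] with ω hω
    rw [Real.norm_eq_abs, Real.abs_exp, Real.exp_le_exp]
    have hρ' : |ρ| ≤ |ρ₀| + 1 := by
      have h := Metric.mem_ball.mp hρ
      rw [Real.dist_eq] at h
      have := abs_sub_abs_le_abs_sub ρ ρ₀
      linarith
    have h2 : |χ ω + l| ≤ 1 + l := (abs_add_le _ _).trans (by rw [abs_of_nonneg hl]; linarith)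
    calc a * ρ * (χ ω + l) ≤ |a * ρ * (χ ω + l)| := le_abs_self _
      _ = |a| * |ρ| * |χ ω + l| := by rw [abs_mul, abs_mul]
      _ ≤ |a| * (|ρ₀| + 1) * (1 + l) := by
          have h4 : |ρ| * |χ ω + l| ≤ (|ρ₀| + 1) * (1 + l) :=
            mul_le_mul hρ' h2 (abs_nonneg _) (by positivity)
          rw [mul_assoc, mul_assoc]
          exact mul_le_mul_of_nonneg_left h4 (abs_nonneg a)
  · exact integrable_const _
  · exact Filter.Eventually.of_forall fun ω =>
      (Continuous.continuousAt (by continuity))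

lemma aux_strict (hmeas : Measurable χ) (hbdd : ∀ᵐ ω ∂μ, |χ ω| ≤ 1)
    (hpos : 0 < μ {ω | 0 < χ ω}) {a l : ℝ} (ha : 0 < a) (hl : 0 < l)
    (x y t s : ℝ) (hxy : x ≠ y) (ht : 0 < t) (hs : 0 < s) (hts : t + s = 1) :
    ∫ ω, Real.exp (a * (t * x + s * y) * (χ ω + l)) ∂μ <
      t * ∫ ω, Real.exp (a * x * (χ ω + l)) ∂μ +
      s * ∫ ω, Real.exp (a * y * (χ ω + l)) ∂μ := by
  have hint1 : Integrable (fun ω => Real.exp (a * x * (χ ω + l))) μ :=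
    aux_int_exp hmeas hbdd (a * x) l
  have hint2 : Integrable (fun ω => Real.exp (a * y * (χ ω + l))) μ :=
    aux_int_exp hmeas hbdd (a * y) l
  have hint3 : Integrable (fun ω => Real.exp (a * (t * x + s * y) * (χ ω + l))) μ :=
    aux_int_exp hmeas hbdd (a * (t * x + s * y)) l
  set h : Ω → ℝ := fun ω => t * Real.exp (a * x * (χ ω + l)) + s * Real.exp (a * y * (χ ω + l))
      - Real.exp (a * (t * x + s * y) * (χ ω + l)) with hh
  have hnn : ∀ ω, 0 ≤ h ω := by
    intro ω
    have hcx := convexOn_exp.2 (Set.mem_univ (a * x * (χ ω + l)))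
      (Set.mem_univ (a * y * (χ ω + l))) ht.le hs.le hts
    simp only [smul_eq_mul] at hcx
    have he : t * (a * x * (χ ω + l)) + s * (a * y * (χ ω + l))
        = a * (t * x + s * y) * (χ ω + l) := by ring
    rw [he] at hcx
    simp only [hh]
    linarith
  have hsub : {ω | 0 < χ ω} ⊆ Function.support h := by
    intro ω hω
    have hχ : (0:ℝ) < χ ω := hω
    have hne : a * x * (χ ω + l) ≠ a * y * (χ ω + l) := by
      intro hcon
      apply hxy
      have hpos2 : (0:ℝ) < a * (χ ω + l) := by nlinarith
      have h' : x * (a * (χ ω + l)) = y * (a * (χ ω + l)) := by nlinarith [hcon]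
      exact mul_right_cancel₀ (ne_of_gt hpos2) h'
    have hstrict := strictConvexOn_exp.2 (Set.mem_univ (a * x * (χ ω + l)))
      (Set.mem_univ (a * y * (χ ω + l))) hne ht hs hts
    simp only [smul_eq_mul] at hstrict
    have he : t * (a * x * (χ ω + l)) + s * (a * y * (χ ω + l))
        = a * (t * x + s * y) * (χ ω + l) := by ring
    rw [he] at hstrict
    simp only [Function.mem_support, hh]
    intro hcon
    linarith
  have hinth : Integrable h μ := by
    exact ((hint1.const_mul t).add (hint2.const_mul s)).sub hint3
  have hposint : 0 < ∫ ω, h ω ∂μ := by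
    rw [MeasureTheory.integral_pos_iff_support_of_nonneg_ae
      (Filter.Eventually.of_forall hnn) hinth]
    exact lt_of_lt_of_le hpos (measure_mono hsub)
  have hsplit : ∫ ω, h ω ∂μ = t * (∫ ω, Real.exp (a * x * (χ ω + l)) ∂μ)
      + s * (∫ ω, Real.exp (a * y * (χ ω + l)) ∂μ)
      - ∫ ω, Real.exp (a * (t * x + s * y) * (χ ω + l)) ∂μ := by
    simp only [hh]
    rw [MeasureTheory.integral_sub (by exact (hint1.const_mul t).add (hint2.const_mul s)) hint3,
      MeasureTheory.integral_add (hint1.const_mul t) (hint2.const_mul s),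
      MeasureTheory.integral_const_mul, MeasureTheory.integral_const_mul]
  linarith [hsplit ▸ hposint]
end Aux3
section Aux4
variable {Ω : Type*} [MeasurableSpace Ω] {μ : Measure Ω} [IsProbabilityMeasure μ] {χ : Ω → ℝ}

lemma aux_no_two (hmeas : Measurable χ) (hbdd : ∀ᵐ ω ∂μ, |χ ω| ≤ 1)
    (hpos : 0 < μ {ω | 0 < χ ω}) {a l : ℝ} (ha : 0 < a) (hl : 0 < l)
    {ρa ρb : ℝ} (hab : ρa < ρb) (hb0 : ρb < 0)
    (h1 : ∫ ω, Real.exp (a * ρa * (χ ω + l)) ∂μ = 1)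
    (h2 : ∫ ω, Real.exp (a * ρb * (χ ω + l)) ∂μ = 1) : False := by
  have ha0 : ρa < 0 := hab.trans hb0
  set t : ℝ := ρb / ρa with htdef
  have ht : 0 < t := div_pos_of_neg_of_neg hb0 ha0
  have ht1 : t < 1 := by
    rw [htdef, div_lt_one_of_neg ha0]
    exact hab
  have hs : 0 < 1 - t := by linarith
  have key := aux_strict hmeas hbdd hpos ha hl ρa 0 t (1 - t)
    (ne_of_lt ha0) ht hs (by ring)
  have e1 : t * ρa + (1 - t) * 0 = ρb := by
    rw [htdef]
    field_simp
    rw [mul_div_assoc, div_self (ne_of_lt ha0), mul_one]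
    ring
  rw [e1] at key
  have e2 : ∫ ω, Real.exp (a * 0 * (χ ω + l)) ∂μ = 1 := by simp
  rw [h1, h2, e2] at key
  linarith

lemma aux_uniq (hmeas : Measurable χ) (hbdd : ∀ᵐ ω ∂μ, |χ ω| ≤ 1)
    (hpos : 0 < μ {ω | 0 < χ ω}) {a l : ℝ} (ha : 0 < a) (hl : 0 < l)
    {ρa ρb : ℝ} (ha0 : ρa < 0) (hb0 : ρb < 0)
    (h1 : ∫ ω, Real.exp (a * ρa * (χ ω + l)) ∂μ = 1)
    (h2 : ∫ ω, Real.exp (a * ρb * (χ ω + l)) ∂μ = 1) : ρa = ρb := by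
  rcases lt_trichotomy ρa ρb with h | h | h
  · exact absurd (aux_no_two hmeas hbdd hpos ha hl h hb0 h1 h2) not_false
  · exact h
  · exact absurd (aux_no_two hmeas hbdd hpos ha hl h ha0 h2 h1) not_false
end Aux4
set_option maxHeartbeats 2000000 in
/-- For a bounded centered non-degenerate random variable `χ` and `C₀ > 0`, for all small
`λ > 0` there is a unique `ρ̃ < 0` with `E(exp(C₀ ρ̃ (χ + λ))) = 1`, and it satisfies the
expansion `ρ̃ = −2λ/(C₀ E(χ²)) + O(λ²)` as `λ → 0`. -/
theorem negative_exponent_expansion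
    {Ω : Type*} [MeasurableSpace Ω] (μ : Measure Ω) [IsProbabilityMeasure μ]
    (χ : Ω → ℝ) (hmeas : Measurable χ)
    (hbdd : ∀ᵐ ω ∂μ, |χ ω| ≤ 1)
    (hmean : ∫ ω, χ ω ∂μ = 0)
    (hvar : 0 < ∫ ω, (χ ω) ^ 2 ∂μ)
    (hpos : 0 < μ {ω | 0 < χ ω})
    (C₀ : ℝ) (hC₀ : 0 < C₀) :
    ∃ lam₀ > (0:ℝ), ∃ C : ℝ, ∀ lam : ℝ, 0 < lam → lam < lam₀ →
      (∃! ρ : ℝ, ρ < 0 ∧ ∫ ω, Real.exp (C₀ * ρ * (χ ω + lam)) ∂μ = 1) ∧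
      (∀ ρ : ℝ, ρ < 0 → (∫ ω, Real.exp (C₀ * ρ * (χ ω + lam)) ∂μ = 1) →
        |ρ + 2 / (C₀ * ∫ ω, (χ ω) ^ 2 ∂μ) * lam| ≤ C * lam ^ 2) := by
  set m : ℝ := ∫ ω, (χ ω) ^ 2 ∂μ with hmdef
  have hm0 : 0 < m := hvar
  have hCm : 0 < C₀ * m := mul_pos hC₀ hm0
  set β : ℝ := 2 / (C₀ * m) with hβdef
  have hβ0 : 0 < β := div_pos (by norm_num) hCm
  have hamβ : C₀ * m * β = 2 := by rw [hβdef]; field_simp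
  set c : ℝ := 2 * β with hcdef
  have hc0 : 0 < c := by rw [hcdef]; linarith
  set K : ℝ := 8 * C₀ ^ 2 * c ^ 3 + 1 with hKdef
  have hCc3 : 0 < C₀ ^ 2 * c ^ 3 := mul_pos (pow_pos hC₀ 2) (pow_pos hc0 3)
  have hK0 : 0 < K := by rw [hKdef]; linarith
  set S : ℝ := C₀ ^ 2 * m * K ^ 2 / 2 + C₀ ^ 2 * c ^ 2 / 2 with hSdef
  clear_value m β c K S
  have hS0 : 0 < S := by
    rw [hSdef]
    have h1 : 0 < C₀ ^ 2 * m * K ^ 2 :=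
      mul_pos (mul_pos (pow_pos hC₀ 2) hm0) (pow_pos hK0 2)
    have h2 : 0 < C₀ ^ 2 * c ^ 2 := mul_pos (pow_pos hC₀ 2) (pow_pos hc0 2)
    linarith
  refine ⟨min (min 1 (1 / (C₀ * m * K))) (min (1 / (2 * C₀ * c)) (C₀ / (S + 1))), ?_, K, ?_⟩
  · apply lt_min
    · exact lt_min one_pos (div_pos one_pos (mul_pos hCm hK0))
    · exact lt_min (div_pos one_pos (mul_pos (mul_pos two_pos hC₀) hc0))
        (div_pos hC₀ (by linarith))
  intro lam hlam hlamlt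
  have hl1 : lam < 1 := hlamlt.trans_le ((min_le_left _ _).trans (min_le_left _ _))
  have hl2 : lam * (C₀ * m * K) < 1 := by
    have hX : lam < 1 / (C₀ * m * K) :=
      hlamlt.trans_le ((min_le_left _ _).trans (min_le_right _ _))
    exact (lt_div_iff₀ (mul_pos hCm hK0)).mp hX
  have hl3 : lam * (2 * C₀ * c) < 1 := by
    have hY : lam < 1 / (2 * C₀ * c) :=
      hlamlt.trans_le ((min_le_right _ _).trans (min_le_left _ _))
    exact (lt_div_iff₀ (mul_pos (mul_pos two_pos hC₀) hc0)).mp hY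
  have hl4 : lam * (S + 1) < C₀ := by
    have hZ : lam < C₀ / (S + 1) :=
      hlamlt.trans_le ((min_le_right _ _).trans (min_le_right _ _))
    exact (lt_div_iff₀ (by linarith)).mp hZ
  set ρ1 : ℝ := -(β * lam) - K * lam ^ 2 with hρ1def
  set ρ2 : ℝ := -(β * lam) + K * lam ^ 2 with hρ2def
  clear_value ρ1 ρ2
  have hC0' : C₀ ≠ 0 := ne_of_gt hC₀
  have hm' : m ≠ 0 := ne_of_gt hm0
  have hKlam : K * lam ≤ β / 2 := by
    have h : K * lam ≤ 1 / (C₀ * m) := by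
      rw [le_div_iff₀ hCm]; linarith [hl2]
    have h2β : 1 / (C₀ * m) = β / 2 := by rw [hβdef]; ring
    linarith [h, le_of_eq h2β]
  have hKlam2 : K * lam ^ 2 ≤ β / 2 * lam := by
    linarith [mul_le_mul_of_nonneg_right hKlam hlam.le]
  have hcl0 : 0 ≤ C₀ * (c * lam) := mul_nonneg hC₀.le (mul_nonneg hc0.le hlam.le)
  have hKlam20 : 0 < K * lam ^ 2 := mul_pos hK0 (pow_pos hlam 2)
  have hβl : 0 < β * lam := mul_pos hβ0 hlam
  have hρ2neg : ρ2 < 0 := by rw [hρ2def]; linarith [hKlam2]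
  have hρ1neg : ρ1 < 0 := by rw [hρ1def]; linarith [hKlam20]
  have hρ12 : ρ1 ≤ ρ2 := by rw [hρ1def, hρ2def]; linarith [hKlam20]
  have habs2 : |ρ2| ≤ c * lam := by
    rw [abs_le, hρ2def, hcdef]
    constructor
    · linarith [hKlam2, hKlam20]
    · linarith [hKlam2, hKlam20]
  have habs1 : |ρ1| ≤ c * lam := by
    rw [abs_le, hρ1def, hcdef]
    constructor
    · linarith [hKlam2, hKlam20]
    · linarith [hKlam2, hKlam20]
  -- Taylor hypotheses
  have hbval : ∀ ρ : ℝ, |ρ| ≤ c * lam → |C₀ * ρ| * (1 + lam) ≤ 1 := by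
    intro ρ hρ
    have e : |C₀ * ρ| = C₀ * |ρ| := by rw [abs_mul, abs_of_pos hC₀]
    have b1 : C₀ * |ρ| ≤ C₀ * (c * lam) := mul_le_mul_of_nonneg_left hρ hC₀.le
    have b2 : (1:ℝ) + lam ≤ 2 := by linarith
    calc |C₀ * ρ| * (1 + lam) ≤ (C₀ * (c * lam)) * 2 := by
          rw [e]
          exact mul_le_mul b1 b2 (by linarith) hcl0
      _ ≤ 1 := by linarith [hl3]
  have hEbound : ∀ ρ : ℝ, |ρ| ≤ c * lam →
      2 / 9 * (|C₀ * ρ| * (1 + lam)) ^ 3 ≤ 2 * (C₀ ^ 3 * c ^ 3 * lam ^ 3) := by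
    intro ρ hρ
    have e : |C₀ * ρ| = C₀ * |ρ| := by rw [abs_mul, abs_of_pos hC₀]
    have hX : |C₀ * ρ| * (1 + lam) ≤ 2 * C₀ * c * lam := by
      rw [e]
      have b1 : C₀ * |ρ| ≤ C₀ * (c * lam) := mul_le_mul_of_nonneg_left hρ hC₀.le
      have b2 : (1:ℝ) + lam ≤ 2 := by linarith
      linarith [mul_le_mul b1 b2 (by linarith : (0:ℝ) ≤ 1 + lam)
        (hcl0 : (0:ℝ) ≤ C₀ * (c * lam))]
    have hXn : 0 ≤ |C₀ * ρ| * (1 + lam) := mul_nonneg (abs_nonneg _) (by linarith)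
    have h3 := pow_le_pow_left₀ hXn hX 3
    have hA : 0 ≤ C₀ ^ 3 * c ^ 3 * lam ^ 3 :=
      le_of_lt (mul_pos (mul_pos (pow_pos hC₀ 3) (pow_pos hc0 3)) (pow_pos hlam 3))
    linarith [h3, hA]
  -- key algebraic identities
  have keyI2 : C₀ * lam * ρ2 + C₀ ^ 2 * m / 2 * ρ2 ^ 2
      = -(C₀ * K * lam ^ 3) + C₀ ^ 2 * m / 2 * K ^ 2 * lam ^ 4 := by
    rw [hρ2def, hβdef]; field_simp; ring
  have keyI1 : C₀ * lam * ρ1 + C₀ ^ 2 * m / 2 * ρ1 ^ 2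
      = C₀ * K * lam ^ 3 + C₀ ^ 2 * m / 2 * K ^ 2 * lam ^ 4 := by
    rw [hρ1def, hβdef]; field_simp; ring
  have hCK : C₀ * K * lam ^ 3 = 8 * (C₀ ^ 3 * c ^ 3 * lam ^ 3) + C₀ * lam ^ 3 := by
    rw [hKdef]; ring
  have hSb : C₀ ^ 2 * m / 2 * K ^ 2 * lam ^ 4 + C₀ ^ 2 * c ^ 2 / 2 * lam ^ 4
      ≤ C₀ * lam ^ 3 := by
    have h4 : lam * (C₀ ^ 2 * m * K ^ 2 / 2 + C₀ ^ 2 * c ^ 2 / 2 + 1) < C₀ := by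
      rw [hSdef] at hl4; linarith
    have h5 := mul_le_mul_of_nonneg_right (le_of_lt h4) (le_of_lt (pow_pos hlam 3))
    linarith [h5, le_of_lt (pow_pos hlam 4)]
  -- Taylor applications
  have ht2 := aux_taylor hmeas hbdd hmean (C₀ * ρ2) lam hlam.le (hbval ρ2 habs2)
  have ht1 := aux_taylor hmeas hbdd hmean (C₀ * ρ1) lam hlam.le (hbval ρ1 habs1)
  rw [← hmdef] at ht1 ht2
  have hsq2 : ρ2 ^ 2 ≤ c ^ 2 * lam ^ 2 := by
    linarith [sq_abs ρ2, pow_le_pow_left₀ (abs_nonneg ρ2) habs2 2]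
  have hterm2 : C₀ ^ 2 * lam ^ 2 / 2 * ρ2 ^ 2 ≤ C₀ ^ 2 * c ^ 2 / 2 * lam ^ 4 := by
    linarith [mul_le_mul_of_nonneg_left hsq2 (show (0:ℝ) ≤ C₀ ^ 2 * lam ^ 2 / 2 by positivity)]
  have hterm1 : 0 ≤ C₀ ^ 2 * lam ^ 2 / 2 * ρ1 ^ 2 := by positivity
  have hP2 : (C₀ * ρ2) * lam + (C₀ * ρ2) ^ 2 * (m + lam ^ 2) / 2
      = (-(C₀ * K * lam ^ 3) + C₀ ^ 2 * m / 2 * K ^ 2 * lam ^ 4)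
        + C₀ ^ 2 * lam ^ 2 / 2 * ρ2 ^ 2 := by linear_combination keyI2
  have hP1 : (C₀ * ρ1) * lam + (C₀ * ρ1) ^ 2 * (m + lam ^ 2) / 2
      = (C₀ * K * lam ^ 3 + C₀ ^ 2 * m / 2 * K ^ 2 * lam ^ 4)
        + C₀ ^ 2 * lam ^ 2 / 2 * ρ1 ^ 2 := by linear_combination keyI1
  have habs2' := abs_le.mp ht2
  have habs1' := abs_le.mp ht1
  have hnn4 : 0 ≤ C₀ ^ 2 * m / 2 * K ^ 2 * lam ^ 4 := by
    have := mul_pos (mul_pos (mul_pos (pow_pos hC₀ 2) hm0) (pow_pos hK0 2)) (pow_pos hlam 4)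
    linarith [this]
  have hCc3l : 0 < C₀ ^ 3 * c ^ 3 * lam ^ 3 :=
    mul_pos (mul_pos (pow_pos hC₀ 3) (pow_pos hc0 3)) (pow_pos hlam 3)
  have hup2 : (∫ ω, Real.exp (C₀ * ρ2 * (χ ω + lam)) ∂μ) < 1 := by
    have hE := hEbound ρ2 habs2
    linarith [habs2'.2, hP2, hCK, hterm2, hSb, hCc3l, mul_pos hC₀ (pow_pos hlam 3)]
  have hlow1 : 1 < ∫ ω, Real.exp (C₀ * ρ1 * (χ ω + lam)) ∂μ := by
    have hE := hEbound ρ1 habs1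
    linarith [habs1'.1, hP1, hCK, hterm1, hnn4, hCc3l, mul_pos hC₀ (pow_pos hlam 3)]
  -- IVT
  have hcont := (aux_cont hmeas hbdd C₀ lam hlam.le).continuousOn (s := Set.Icc ρ1 ρ2)
  have hIVT := intermediate_value_Ioo'
    (f := fun ρ : ℝ => ∫ ω, Real.exp (C₀ * ρ * (χ ω + lam)) ∂μ) hρ12 hcont
  obtain ⟨ρt, hρtmem, hρteq⟩ := hIVT ⟨hup2, hlow1⟩
  simp only [] at hρteq
  have hρtneg : ρt < 0 := hρtmem.2.trans hρ2neg
  have huniq : ∀ ρ' : ℝ, ρ' < 0 → (∫ ω, Real.exp (C₀ * ρ' * (χ ω + lam)) ∂μ = 1) → ρ' = ρt :=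
    fun ρ' h' he' => aux_uniq hmeas hbdd hpos hC₀ hlam h' hρtneg he' hρteq
  refine ⟨⟨ρt, ⟨hρtneg, hρteq⟩, fun ρ' h' => huniq ρ' h'.1 h'.2⟩, ?_⟩
  intro ρ hρ hfeq
  rw [huniq ρ hρ hfeq, abs_le]
  constructor
  · have := hρtmem.1
    rw [hρ1def] at this
    linarith
  · have := hρtmem.2
    rw [hρ2def] at this
    linarith
end

section
/- With Q, D as above and x̂₊ := 2e^{2C₀}/(C₁ε): if x ∈ [x̂₊, ∞) then Q·(D·x) ∉ [0,∞), i.e. the point x̂₊ is mapped past infinity by one step of the dynamics, for all ε small enough. -/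
open Real

/-- Points beyond `x̂₊ = 2e^{2C₀}/(C₁ε)` are mapped past infinity by one step of the
Dyson–Schmidt dynamics: `Q·(D·x) ∉ [0,∞)`, i.e. `Q·(κ²x) < 0`, for all small `ε`. -/
theorem moebius_QD_past_infinity
    (C₀ C₁ C₂ C₃ : ℝ) (hC₀ : 0 < C₀) (hC₁ : 0 < C₁) (hC₂ : 0 < C₂) (hC₃ : 0 < C₃) :
    ∃ ε₀ > (0:ℝ), ∀ ε : ℝ, 0 < ε → ε < ε₀ →
      ∀ a b α β γ δ κ x : ℝ,
        C₁ ≤ a - |b| → a + |b| ≤ C₂ →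
        |α| ≤ C₃ → |β| ≤ C₃ → |γ| ≤ C₃ → |δ| ≤ C₃ →
        0 < κ → |Real.log κ| ≤ C₀ →
        2 * Real.exp (2 * C₀) / (C₁ * ε) ≤ x →
        ((1 + ε ^ 2 * α) * (κ ^ 2 * x) + (a - b - ε * β) * ε) /
            (1 + ε ^ 2 * δ - (a + b + ε * γ) * ε * (κ ^ 2 * x)) < 0 := by
  refine ⟨min (C₁ / (4 * C₃)) (1 / (2 * C₃ + 1)), by positivity, ?_⟩
  intro ε hε hεlt a b α β γ δ κ x hab1 hab2 hα hβ hγ hδ hκ hlogκ hx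
  have hε1 : ε < C₁ / (4 * C₃) := lt_of_lt_of_le hεlt (min_le_left _ _)
  have hε2 : ε < 1 / (2 * C₃ + 1) := lt_of_lt_of_le hεlt (min_le_right _ _)
  have hC3e : C₃ * ε < C₁ / 4 := by
    have := (lt_div_iff₀ (by positivity)).mp hε1
    linarith [this]
  have hεlt1 : ε < 1 := lt_of_lt_of_le hε2 (by
    rw [div_le_one (by positivity)]; linarith)
  have hC3e2 : C₃ * ε < 1 / 2 := by
    have := (lt_div_iff₀ (by positivity)).mp hε2
    nlinarith
  -- κ² ≥ exp(-2C₀)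
  have hκ2 : Real.exp (-(2 * C₀)) ≤ κ ^ 2 := by
    have h1 : -C₀ ≤ Real.log κ := (abs_le.mp hlogκ).1
    have h2 : Real.exp (-C₀) ≤ κ := by
      calc Real.exp (-C₀) ≤ Real.exp (Real.log κ) := Real.exp_le_exp.mpr h1
        _ = κ := Real.exp_log hκ
    have h3 : Real.exp (-C₀) ^ 2 ≤ κ ^ 2 := by
      apply pow_le_pow_left₀ (Real.exp_pos _).le h2
    calc Real.exp (-(2 * C₀)) = Real.exp (-C₀) ^ 2 := by
          rw [← Real.exp_nat_mul]; ring_nf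
      _ ≤ κ ^ 2 := h3
  set y := κ ^ 2 * x with hy
  -- ε * y ≥ 2 / C₁
  have hxpos : 0 < x := lt_of_lt_of_le (by positivity) hx
  have hεy : 2 / C₁ ≤ ε * y := by
    have hk : Real.exp (-(2 * C₀)) * (2 * Real.exp (2 * C₀) / (C₁ * ε)) ≤ y := by
      calc Real.exp (-(2 * C₀)) * (2 * Real.exp (2 * C₀) / (C₁ * ε))
          ≤ κ ^ 2 * (2 * Real.exp (2 * C₀) / (C₁ * ε)) := by
            apply mul_le_mul_of_nonneg_right hκ2 (by positivity)
        _ ≤ κ ^ 2 * x := by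
            apply mul_le_mul_of_nonneg_left hx (by positivity)
    have hee : Real.exp (-(2 * C₀)) * (2 * Real.exp (2 * C₀) / (C₁ * ε))
        = 2 / (C₁ * ε) := by
      rw [mul_div_assoc', ← mul_assoc]
      rw [mul_comm (Real.exp (-(2 * C₀))) 2, mul_assoc, ← Real.exp_add]
      simp
    have : 2 / (C₁ * ε) ≤ y := hee ▸ hk
    calc 2 / C₁ = ε * (2 / (C₁ * ε)) := by field_simp
      _ ≤ ε * y := mul_le_mul_of_nonneg_left this hε.le
  have hypos : 0 < y := by positivity
  have hα' := (abs_le.mp hα).1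
  have hβ' := (abs_le.mp hβ).2
  have hγ' := (abs_le.mp hγ).1
  have hδ' := (abs_le.mp hδ).2
  have habs := abs_nonneg b
  have hb1 : b ≤ |b| := le_abs_self b
  have hb2 : -|b| ≤ b := neg_abs_le b
  -- numerator positive
  have hnum : 0 < (1 + ε ^ 2 * α) * y + (a - b - ε * β) * ε := by
    have h1 : (1:ℝ)/2 < 1 + ε ^ 2 * α := by nlinarith
    have h2 : 0 < a - b - ε * β := by nlinarith
    have hA : 0 < (1 + ε ^ 2 * α) * y := mul_pos (by linarith) hypos
    have hB : 0 < (a - b - ε * β) * ε := mul_pos h2 hε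
    linarith
  -- denominator negative
  have hden : 1 + ε ^ 2 * δ - (a + b + ε * γ) * ε * y < 0 := by
    have hγε : ε * -C₃ ≤ ε * γ := mul_le_mul_of_nonneg_left hγ' hε.le
    have h1 : 3 * C₁ / 4 ≤ a + b + ε * γ := by linarith
    have h2 : (3 * C₁ / 4) * (ε * y) ≤ (a + b + ε * γ) * (ε * y) := by
      apply mul_le_mul_of_nonneg_right h1 (by positivity)
    have h3 : (3 * C₁ / 4) * (2 / C₁) ≤ (3 * C₁ / 4) * (ε * y) := by
      apply mul_le_mul_of_nonneg_left hεy (by positivity)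
    have h4 : (3 * C₁ / 4) * (2 / C₁) = 3 / 2 := by field_simp; ring
    have hsq : ε ^ 2 ≤ ε := by
      have := mul_le_mul_of_nonneg_left hεlt1.le hε.le
      calc ε ^ 2 = ε * ε := sq ε
        _ ≤ ε * 1 := this
        _ = ε := mul_one ε
    have hδε : ε ^ 2 * δ ≤ ε ^ 2 * C₃ := mul_le_mul_of_nonneg_left hδ' (sq_nonneg ε)
    have hδε2 : ε ^ 2 * C₃ ≤ ε * C₃ := mul_le_mul_of_nonneg_right hsq hC₃.le
    have h5 : 1 + ε ^ 2 * δ < 3 / 2 := by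
      have : ε * C₃ < 1 / 2 := by linarith
      linarith
    have h6 : (a + b + ε * γ) * ε * y = (a + b + ε * γ) * (ε * y) := by ring
    linarith
  exact div_neg_of_pos_of_neg hnum hden
end

section
/- Fix constants C₀, C₂, C₃ > 0, and let λ = λ(ε) > 0 satisfy λ → 0, log λ / log ε → 0, ε/λ → 0 as ε → 0; set Λ = exp(2C₀λ). Then for all ε small enough there exist x̃₋, x̃₊ with the following property: for every Möbius map Q·y = ((1+ε²α)y+(a−b−εβ)ε)/(1+ε²δ−(a+b+εγ)ε y) with a+|b| ≤ C₂ and |α|,|β|,|γ|,|δ| ≤ C₃, and every κ with |log κ| ≤ C₀, one has Q·(κ²x) ≤ Λ·κ²x for all x ∈ [x̃₋, x̃₊]. Moreover λx̃₋/ε → C₂e^{2C₀}/(2C₀) and εx̃₊/λ → 2C₀/(C₂e^{2C₀}) as ε → 0. -/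
open Real Filter Topology

noncomputable def fwB (C₀ C₃ : ℝ) (lam : ℝ → ℝ) (ε : ℝ) : ℝ :=
  Real.exp (2*C₀*lam ε) - 1 - ε^2*C₃*(Real.exp (2*C₀*lam ε)+1)

noncomputable def fwXm (C₀ C₂ C₃ : ℝ) (lam : ℝ → ℝ) (ε : ℝ) : ℝ :=
  Real.exp (2*C₀) * (1+ε/lam ε) * ((C₂+C₃*ε)*ε) / fwB C₀ C₃ lam ε

noncomputable def fwXp (C₀ C₂ C₃ : ℝ) (lam : ℝ → ℝ) (ε : ℝ) : ℝ :=
  Real.exp (-(2*C₀)) * (1-ε/lam ε) * fwB C₀ C₃ lam ε /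
    (Real.exp (2*C₀*lam ε) * ((C₂+C₃*ε)*ε))

set_option maxHeartbeats 1600000 in
/-- Key estimate for the faster comparison process: there is a middle window
`[x̃₋, x̃₊]` on which the perturbed Möbius dynamics is dominated by
`Λ = exp(2C₀λ)` times the diagonal action, with the stated asymptotics of the
window endpoints. -/
theorem faster_window_estimate
    (C₀ C₂ C₃ : ℝ) (hC₀ : 0 < C₀) (hC₂ : 0 < C₂) (hC₃ : 0 < C₃)
    (lam : ℝ → ℝ) (hlampos : ∀ ε : ℝ, 0 < ε → 0 < lam ε)
    (h1 : Tendsto lam (𝓝[>] (0:ℝ)) (𝓝 0))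
    (h2 : Tendsto (fun ε => Real.log (lam ε) / Real.log ε) (𝓝[>] (0:ℝ)) (𝓝 0))
    (h3 : Tendsto (fun ε => ε / lam ε) (𝓝[>] (0:ℝ)) (𝓝 0)) :
    ∃ xm xp : ℝ → ℝ,
      (∀ᶠ ε in 𝓝[>] (0:ℝ), ∀ a b α β γ δ κ x : ℝ,
        a + |b| ≤ C₂ →
        |α| ≤ C₃ → |β| ≤ C₃ → |γ| ≤ C₃ → |δ| ≤ C₃ →
        0 < κ → |Real.log κ| ≤ C₀ →
        xm ε ≤ x → x ≤ xp ε →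
        ((1 + ε ^ 2 * α) * (κ ^ 2 * x) + (a - b - ε * β) * ε) /
            (1 + ε ^ 2 * δ - (a + b + ε * γ) * ε * (κ ^ 2 * x)) ≤
          Real.exp (2 * C₀ * lam ε) * (κ ^ 2 * x)) ∧
      Tendsto (fun ε => lam ε * xm ε / ε) (𝓝[>] (0:ℝ))
        (𝓝 (C₂ * Real.exp (2 * C₀) / (2 * C₀))) ∧
      Tendsto (fun ε => ε * xp ε / lam ε) (𝓝[>] (0:ℝ))
        (𝓝 (2 * C₀ / (C₂ * Real.exp (2 * C₀)))) := by
  -- the set of good ε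
  have hδ₀ : (0:ℝ) < min 1 (min (1/(4*C₃)) (2*C₀/(3*C₃))) := by positivity
  have hL₀ : (0:ℝ) < Real.log (3/2) / (2*C₀) := by
    have : (0:ℝ) < Real.log (3/2) := Real.log_pos (by norm_num)
    positivity
  have hη₀ : (0:ℝ) < min (1/2) (2*C₀^2/(9*(C₂+C₃)^2)) := by positivity
  have hev : ∀ᶠ ε in 𝓝[>] (0:ℝ),
      (0 < ε ∧ ε ≤ 1 ∧ ε^2*C₃ ≤ 1/4 ∧ ε ≤ 2*C₀/(3*C₃)) ∧
      (0 < lam ε ∧ Real.exp (2*C₀*lam ε) ≤ 3/2) ∧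
      (0 < ε/lam ε ∧ ε/lam ε ≤ 1/2 ∧ ε/lam ε ≤ 2*C₀^2/(9*(C₂+C₃)^2)) ∧
      C₀ * lam ε ≤ fwB C₀ C₃ lam ε := by
    filter_upwards [Ioo_mem_nhdsGT_of_mem (⟨le_refl _, hδ₀⟩ : (0:ℝ) ∈ Set.Ico 0 _),
      h1.eventually (eventually_lt_nhds hL₀),
      h3.eventually (eventually_lt_nhds hη₀)] with ε hδ hL hη
    obtain ⟨hε0, hεδ⟩ := hδ
    have hε1 : ε ≤ 1 := le_of_lt (lt_of_lt_of_le hεδ (min_le_left _ _))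
    have hε2 : ε ≤ 1/(4*C₃) :=
      le_of_lt (lt_of_lt_of_le hεδ ((min_le_right _ _).trans (min_le_left _ _)))
    have hε3 : ε ≤ 2*C₀/(3*C₃) :=
      le_of_lt (lt_of_lt_of_le hεδ ((min_le_right _ _).trans (min_le_right _ _)))
    have hlam : 0 < lam ε := hlampos ε hε0
    have hηh : ε/lam ε ≤ 1/2 := le_of_lt (lt_of_lt_of_le hη (min_le_left _ _))
    have hη6 : ε/lam ε ≤ 2*C₀^2/(9*(C₂+C₃)^2) :=
      le_of_lt (lt_of_lt_of_le hη (min_le_right _ _))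
    have hεC3 : ε*C₃ ≤ 1/4 := by
      rw [le_div_iff₀ (by positivity)] at hε2; linarith
    have hεC : ε^2*C₃ ≤ 1/4 := by
      have h := mul_le_mul_of_nonneg_left hεC3 hε0.le
      linarith only [h, hε1]
    have hΛub : Real.exp (2*C₀*lam ε) ≤ 3/2 := by
      have h2l : 2*C₀*lam ε ≤ Real.log (3/2) := by
        rw [lt_div_iff₀ (by positivity)] at hL
        linarith only [hL]
      calc Real.exp (2*C₀*lam ε) ≤ Real.exp (Real.log (3/2)) := Real.exp_le_exp.2 h2l
        _ = 3/2 := Real.exp_log (by norm_num)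
    refine ⟨⟨hε0, hε1, hεC, hε3⟩, ⟨hlam, hΛub⟩, ⟨by positivity, hηh, hη6⟩, ?_⟩
    -- lower bound for B
    have hΛlb : 1 + 2*C₀*lam ε ≤ Real.exp (2*C₀*lam ε) := by
      have := Real.add_one_le_exp (2*C₀*lam ε); linarith
    have hεL : ε ≤ lam ε / 2 := by
      rw [div_le_iff₀ hlam] at hηh; linarith
    have hC3e : C₃ * ε ≤ 2*C₀/3 := by
      rw [le_div_iff₀ (by positivity)] at hε3; linarith
    have hp1 : ε * (C₃ * ε) ≤ (lam ε/2) * (2*C₀/3) :=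
      mul_le_mul hεL hC3e (by positivity) (by positivity)
    have hp2 : 0 ≤ (5/2 - (Real.exp (2*C₀*lam ε) + 1)) * (ε^2*C₃) :=
      mul_nonneg (by linarith) (by positivity)
    unfold fwB
    linarith only [hp1, hp2, hΛlb, mul_pos hC₀ hlam]
  -- basic limits
  have hεt : Tendsto (fun ε : ℝ => ε) (𝓝[>] (0:ℝ)) (𝓝 0) :=
    tendsto_id.mono_left nhdsWithin_le_nhds
  have hevpos : ∀ᶠ ε in 𝓝[>] (0:ℝ), 0 < ε ∧ 0 < lam ε := by
    filter_upwards [self_mem_nhdsWithin] with ε hε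
    exact ⟨hε, hlampos ε hε⟩
  have hc : Tendsto (fun ε => 2*C₀*lam ε) (𝓝[>] (0:ℝ)) (𝓝 0) := by
    have := h1.const_mul (2*C₀); simpa using this
  have hΛt : Tendsto (fun ε => Real.exp (2*C₀*lam ε)) (𝓝[>] (0:ℝ)) (𝓝 1) := by
    have := (Real.continuous_exp.tendsto 0).comp hc
    rw [Real.exp_zero] at this; exact this
  have hslope : Tendsto (fun t : ℝ => (Real.exp t - 1)/t) (𝓝[≠] (0:ℝ)) (𝓝 1) := by
    have h := (hasDerivAt_iff_tendsto_slope.mp (by simpa using Real.hasDerivAt_exp 0))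
    apply h.congr
    intro t
    simp [slope_def_field, div_eq_inv_mul, mul_comm]
  have hlamne : Tendsto (fun ε => 2*C₀*lam ε) (𝓝[>] (0:ℝ)) (𝓝[≠] (0:ℝ)) := by
    apply tendsto_nhdsWithin_of_tendsto_nhds_of_eventually_within _ hc
    filter_upwards [hevpos] with ε hε
    have : (0:ℝ) < 2*C₀*lam ε := by have := hε.2; positivity
    exact ne_of_gt this
  have hA : Tendsto (fun ε => (Real.exp (2*C₀*lam ε) - 1)/(lam ε)) (𝓝[>] (0:ℝ))
      (𝓝 (2*C₀)) := by
    have comp := hslope.comp hlamne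
    have hm := comp.const_mul (2*C₀)
    rw [mul_one] at hm
    apply hm.congr'
    filter_upwards [hevpos] with ε hε
    have hl : lam ε ≠ 0 := ne_of_gt hε.2
    have hc0 : C₀ ≠ 0 := ne_of_gt hC₀
    show 2*C₀ * ((Real.exp (2*C₀*lam ε) - 1)/(2*C₀*lam ε)) = _
    field_simp
  have hsecond : Tendsto (fun ε => ε^2*C₃*(Real.exp (2*C₀*lam ε)+1)/(lam ε))
      (𝓝[>] (0:ℝ)) (𝓝 0) := by
    have base : Tendsto (fun ε => (ε*(ε/lam ε))*(C₃*(Real.exp (2*C₀*lam ε)+1)))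
        (𝓝[>] (0:ℝ)) (𝓝 ((0*0)*(C₃*(1+1)))) :=
      (hεt.mul h3).mul (((hΛt.add tendsto_const_nhds)).const_mul C₃)
    rw [show ((0:ℝ)*0)*(C₃*(1+1)) = 0 by ring] at base
    apply base.congr'
    filter_upwards [hevpos] with ε hε
    have hl : lam ε ≠ 0 := ne_of_gt hε.2
    field_simp
  have hBlamT : Tendsto (fun ε => fwB C₀ C₃ lam ε / lam ε) (𝓝[>] (0:ℝ)) (𝓝 (2*C₀)) := by
    have hsub := hA.sub hsecond
    rw [sub_zero] at hsub
    apply hsub.congr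
    intro ε
    unfold fwB
    ring
  have hlamB : Tendsto (fun ε => lam ε / fwB C₀ C₃ lam ε) (𝓝[>] (0:ℝ))
      (𝓝 ((2*C₀)⁻¹)) := by
    have := hBlamT.inv₀ (by positivity)
    apply this.congr
    intro ε
    rw [inv_div]
  refine ⟨fwXm C₀ C₂ C₃ lam, fwXp C₀ C₂ C₃ lam, ?_, ?_, ?_⟩
  · -- main estimate
    filter_upwards [hev] with ε hε
    obtain ⟨⟨hε0, hε1, hεC, hεC'⟩, ⟨hlam, hΛub⟩, ⟨hη0, hηh, hη6⟩, hBlb⟩ := hε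
    intro a b α β γ δ κ x hab hα hβ hγ hδ hκ hlogκ hxm hxp
    set Λ : ℝ := Real.exp (2 * C₀ * lam ε) with hΛdef
    set y : ℝ := κ ^ 2 * x with hydef
    set Cc : ℝ := (C₂+C₃*ε)*ε with hCcdef
    set η : ℝ := ε / lam ε with hηdef
    set Be : ℝ := fwB C₀ C₃ lam ε with hBedef
    have hBe_eq : Be = Λ - 1 - ε^2*C₃*(Λ+1) := by
      rw [hBedef, hΛdef]; rfl
    have hxm' : Real.exp (2*C₀) * (1+η) * Cc / Be ≤ x := by
      have : fwXm C₀ C₂ C₃ lam ε = Real.exp (2*C₀) * (1+η) * Cc / Be := by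
        unfold fwXm; rw [hηdef, hCcdef, hBedef]
      rwa [this] at hxm
    have hxp' : x ≤ Real.exp (-(2*C₀)) * (1-η) * Be / (Λ * Cc) := by
      have : fwXp C₀ C₂ C₃ lam ε = Real.exp (-(2*C₀)) * (1-η) * Be / (Λ * Cc) := by
        unfold fwXp; rw [hηdef, hCcdef, hBedef, hΛdef]
      rwa [this] at hxp
    have hΛ1 : 1 < Λ := by
      rw [hΛdef]
      have h0 : (0:ℝ) < 2*C₀*lam ε := by positivity
      calc (1:ℝ) = Real.exp 0 := by simp
        _ < Real.exp (2*C₀*lam ε) := Real.exp_lt_exp.2 h0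
    have hCc0 : 0 < Cc := by rw [hCcdef]; positivity
    clear_value Λ y Cc η Be
    clear hev hevpos hc hΛt hslope hlamne hA hsecond hBlamT hlamB
    have hB0 : 0 < Be := lt_of_lt_of_le (by positivity) hBlb
    have hBub : Be ≤ Λ - 1 := by
      have h0 : 0 ≤ ε^2*C₃*(Λ+1) :=
        mul_nonneg (by positivity) (by linarith)
      rw [hBe_eq]; linarith
    -- κ² bounds
    have hκsq : κ ^ 2 = Real.exp (2 * Real.log κ) := by
      rw [two_mul, Real.exp_add, Real.exp_log hκ]; ring
    obtain ⟨hlogl, hlogu⟩ := abs_le.mp hlogκ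
    have hk2l : Real.exp (-(2*C₀)) ≤ κ ^ 2 := by
      rw [hκsq]; exact Real.exp_le_exp.2 (by linarith)
    have hk2u : κ ^ 2 ≤ Real.exp (2*C₀) := by
      rw [hκsq]; exact Real.exp_le_exp.2 (by linarith)
    have hee : Real.exp (-(2*C₀)) * Real.exp (2*C₀) = 1 := by
      rw [← Real.exp_add]; simp
    have hexp2pos : (0:ℝ) < Real.exp (2*C₀) := Real.exp_pos _
    have hexpnpos : (0:ℝ) < Real.exp (-(2*C₀)) := Real.exp_pos _
    -- positivity of x and y
    have h1η : (0:ℝ) < 1 + η := by linarith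
    have hxm0 : 0 < Real.exp (2*C₀) * (1+η) * Cc / Be :=
      div_pos (mul_pos (mul_pos hexp2pos h1η) hCc0) hB0
    have hx0 : 0 < x := lt_of_lt_of_le hxm0 hxm'
    have hy0 : 0 < y := by rw [hydef]; positivity
    have hΛCc : 0 < Λ * Cc := mul_pos (by linarith) hCc0
    -- lower bound : (1+η)Cc ≤ Be y
    have hyx : Real.exp (-(2*C₀)) * x ≤ y := by
      rw [hydef]; exact mul_le_mul_of_nonneg_right hk2l hx0.le
    have hBy : (1+η)*Cc ≤ Be * y := by
      have t1 : Real.exp (2*C₀) * (1+η) * Cc ≤ x * Be := (div_le_iff₀ hB0).mp hxm'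
      have t1' := mul_le_mul_of_nonneg_left t1 hexpnpos.le
      have hintA := mul_le_mul_of_nonneg_left hyx hB0.le
      have heeCc : Real.exp (-(2*C₀)) * (Real.exp (2*C₀) * (1+η) * Cc) = (1+η)*Cc := by
        rw [show Real.exp (-(2*C₀)) * (Real.exp (2*C₀) * (1+η) * Cc)
          = (Real.exp (-(2*C₀)) * Real.exp (2*C₀)) * ((1+η)*Cc) from by ring, hee, one_mul]
      linarith [t1', hintA, heeCc]
    -- upper bound : Λ Cc y ≤ (1-η) Be
    have hxy : y ≤ Real.exp (2*C₀) * x := by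
      rw [hydef]; exact mul_le_mul_of_nonneg_right hk2u hx0.le
    have hΛCy : Λ * Cc * y ≤ (1-η)*Be := by
      have t2 : x * (Λ * Cc) ≤ Real.exp (-(2*C₀)) * (1-η) * Be :=
        (le_div_iff₀ hΛCc).mp hxp'
      have t2' := mul_le_mul_of_nonneg_left t2 hexp2pos.le
      have hintA := mul_le_mul_of_nonneg_left hxy hΛCc.le
      have heeBe : Real.exp (2*C₀) * (Real.exp (-(2*C₀)) * (1-η) * Be) = (1-η)*Be := by
        rw [show Real.exp (2*C₀) * (Real.exp (-(2*C₀)) * (1-η) * Be)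
          = (Real.exp (-(2*C₀)) * Real.exp (2*C₀)) * ((1-η)*Be) from by ring, hee, one_mul]
      linarith [t2', hintA, heeBe]
    -- the quadratic bound (E6)
    have hE6 : 3*Λ*Cc^2 ≤ η*Be^2 := by
      have s1 : Cc ≤ (C₂+C₃)*ε := by
        rw [hCcdef]
        have h := mul_le_mul_of_nonneg_right
          (mul_le_mul_of_nonneg_left hε1 hC₃.le) hε0.le
        linarith only [h]
      have s2 : ε*(9*(C₂+C₃)^2) ≤ 2*C₀^2 * lam ε := by
        have h := hη6
        rw [hηdef, div_le_div_iff₀ hlam (by positivity)] at h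
        linarith only [h]
      have s3 : 3*Λ*Cc^2 ≤ (9/2)*(C₂+C₃)^2*ε^2 := by
        have m := mul_le_mul s1 s1 hCc0.le (by positivity : (0:ℝ) ≤ (C₂+C₃)*ε)
        have h := mul_nonneg (by linarith : (0:ℝ) ≤ 3/2-Λ) (sq_nonneg Cc)
        linarith only [m, h]
      have s4 : (9/2)*(C₂+C₃)^2*ε^2 ≤ η*Be^2 := by
        have e1 : η * (C₀ * lam ε)^2 = C₀^2 * ε * lam ε := by
          rw [hηdef]; field_simp
        have e2 : η * (C₀*lam ε)^2 ≤ η*Be^2 := by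
          apply mul_le_mul_of_nonneg_left _ hη0.le
          exact pow_le_pow_left₀ (by positivity) hBlb 2
        have h := mul_le_mul_of_nonneg_left s2 (by positivity : (0:ℝ) ≤ ε/2)
        linarith only [h, e1, e2]
      linarith
    -- the quadratic is nonpositive at y
    have hf : Λ * Cc * y^2 - Be * y + Cc ≤ 0 := by
      have H0 : 0 ≤ (Be * y - (1+η)*Cc) * ((1-η)*Be - Λ*Cc*y) :=
        mul_nonneg (by linarith) (by linarith)
      have T1 : 3*Λ*Cc^2*y ≤ η*Be^2*y := mul_le_mul_of_nonneg_right hE6 hy0.le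
      have T2 : 0 ≤ (1/2 - η)*(Λ*Cc^2*y) := by
        apply mul_nonneg (by linarith)
        have : (0:ℝ) < Λ := by linarith
        positivity
      have T4 : 2*η*Cc ≤ Be * y := by
        have h := mul_nonneg (by linarith : (0:ℝ) ≤ 1-η) hCc0.le
        linarith only [h, hBy]
      have T4b : (η*Be/2)*(2*η*Cc) ≤ (η*Be/2)*(Be * y) :=
        mul_le_mul_of_nonneg_left T4 (by positivity)
      have hBf : Be * (Λ * Cc * y^2 - Be * y + Cc) ≤ 0 := by
        linarith only [H0, T1, T2, T4b]
      by_contra hcon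
      push_neg at hcon
      have := mul_pos hB0 hcon
      linarith only [this, hBf]
    -- parameter bounds
    have habs_b : b ≤ |b| := le_abs_self b
    have habs_b' : -b ≤ |b| := neg_le_abs b
    obtain ⟨hγl, hγu⟩ := abs_le.mp hγ
    obtain ⟨hδl, hδu⟩ := abs_le.mp hδ
    obtain ⟨hαl, hαu⟩ := abs_le.mp hα
    obtain ⟨hβl, hβu⟩ := abs_le.mp hβ
    have hab2 : a + b + ε*γ ≤ C₂ + C₃*ε := by
      have h := mul_le_mul_of_nonneg_left hγu hε0.le
      linarith only [h, hab, habs_b]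
    have hab1 : a - b - ε*β ≤ C₂ + C₃*ε := by
      have h := mul_le_mul_of_nonneg_left hβl hε0.le
      linarith only [h, hab, habs_b']
    have hCcy : Cc * y ≤ 1/2 := by
      have h1 : 0 ≤ (Λ-1)*(Cc*y) :=
        mul_nonneg (by linarith) (mul_pos hCc0 hy0).le
      have h2 : 0 ≤ η*Be := mul_nonneg hη0.le hB0.le
      linarith only [h1, h2, hΛCy, hBub, hΛub]
    have hD : (1:ℝ)/4 ≤ 1 + ε ^ 2 * δ - (a + b + ε * γ) * ε * y := by
      have d1 : (a + b + ε * γ) * ε * y ≤ (C₂ + C₃*ε) * ε * y := by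
        apply mul_le_mul_of_nonneg_right _ hy0.le
        exact mul_le_mul_of_nonneg_right hab2 hε0.le
      have d2 : -(1/4) ≤ ε^2*δ := by
        have h := mul_le_mul_of_nonneg_left hδl (sq_nonneg ε)
        linarith only [h, hεC]
      have d3 : (C₂ + C₃*ε) * ε * y = Cc * y := by rw [hCcdef]
      linarith only [d1, d2, hCcy, d3.le, d3.ge]
    rw [div_le_iff₀ (by linarith : (0:ℝ) <
      1 + ε ^ 2 * δ - (a + b + ε * γ) * ε * y)]
    -- final linear combination
    have P1 : 0 ≤ Λ*y*(ε^2*(δ+C₃)) := by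
      apply mul_nonneg (mul_nonneg (by linarith) hy0.le)
      apply mul_nonneg (by positivity) (by linarith)
    have P2 : 0 ≤ (C₂+C₃*ε-(a+b+ε*γ))*(Λ*(ε*y^2)) := by
      apply mul_nonneg (by linarith)
      apply mul_nonneg (by linarith) (by positivity)
    have P3 : 0 ≤ (C₂+C₃*ε-(a-b-ε*β))*ε :=
      mul_nonneg (by linarith) hε0.le
    have P4 : 0 ≤ (C₃-α)*(ε^2*y) :=
      mul_nonneg (by linarith) (by positivity)
    have hf' : Λ * ((C₂+C₃*ε)*ε) * y^2
        - (Λ - 1 - ε^2*C₃*(Λ+1)) * y + (C₂+C₃*ε)*ε ≤ 0 := by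
      rw [hCcdef, hBe_eq] at hf
      linarith [hf]
    linarith only [P1, P2, P3, P4, hf']
  · -- asymptotics of xm
    have hmain : Tendsto
        (fun ε => Real.exp (2*C₀) * (1+ε/lam ε) * (C₂+C₃*ε) * (lam ε / fwB C₀ C₃ lam ε))
        (𝓝[>] (0:ℝ))
        (𝓝 (Real.exp (2*C₀) * (1+0) * (C₂+C₃*0) * (2*C₀)⁻¹)) :=
      ((tendsto_const_nhds.mul (tendsto_const_nhds.add h3)).mul
        (tendsto_const_nhds.add (hεt.const_mul C₃))).mul hlamB
    have hlim : Real.exp (2*C₀) * (1+0) * (C₂+C₃*0) * (2*C₀)⁻¹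
        = C₂ * Real.exp (2*C₀) / (2*C₀) := by ring
    rw [hlim] at hmain
    have heq : (2:ℝ) * C₀ = 2*C₀ := rfl
    apply hmain.congr'
    filter_upwards [hev] with ε hε
    obtain ⟨⟨hε0, _, _, _⟩, ⟨hlam, _⟩, _, hBlb⟩ := hε
    have hB0 : 0 < fwB C₀ C₃ lam ε := lt_of_lt_of_le (by positivity) hBlb
    have hne1 : ε ≠ 0 := ne_of_gt hε0
    have hne2 : lam ε ≠ 0 := ne_of_gt hlam
    have hne3 : fwB C₀ C₃ lam ε ≠ 0 := ne_of_gt hB0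
    show Real.exp (2*C₀) * (1+ε/lam ε) * (C₂+C₃*ε) * (lam ε / fwB C₀ C₃ lam ε)
        = lam ε * fwXm C₀ C₂ C₃ lam ε / ε
    unfold fwXm
    field_simp
  · -- asymptotics of xp
    have hden : Tendsto (fun ε => Real.exp (2*C₀*lam ε) * (C₂+C₃*ε)) (𝓝[>] (0:ℝ))
        (𝓝 (1*(C₂+C₃*0))) := hΛt.mul (tendsto_const_nhds.add (hεt.const_mul C₃))
    have hmain : Tendsto
        (fun ε => Real.exp (-(2*C₀)) * (1-ε/lam ε) * (fwB C₀ C₃ lam ε / lam ε) *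
          (Real.exp (2*C₀*lam ε) * (C₂+C₃*ε))⁻¹)
        (𝓝[>] (0:ℝ))
        (𝓝 (Real.exp (-(2*C₀)) * (1-0) * (2*C₀) * (1*(C₂+C₃*0))⁻¹)) :=
      ((tendsto_const_nhds.mul (tendsto_const_nhds.sub h3)).mul hBlamT).mul
        (hden.inv₀ (by simpa using hC₂.ne'))
    have hlim : Real.exp (-(2*C₀)) * (1-0) * (2*C₀) * ((1:ℝ)*(C₂+C₃*0))⁻¹
        = 2*C₀ / (C₂ * Real.exp (2*C₀)) := by
      rw [Real.exp_neg]
      have h0 : Real.exp (2*C₀) ≠ 0 := (Real.exp_pos _).ne'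
      field_simp
      ring
    rw [hlim] at hmain
    apply hmain.congr'
    filter_upwards [hev] with ε hε
    obtain ⟨⟨hε0, _, _, _⟩, ⟨hlam, _⟩, _, hBlb⟩ := hε
    have hB0 : 0 < fwB C₀ C₃ lam ε := lt_of_lt_of_le (by positivity) hBlb
    have hne1 : ε ≠ 0 := ne_of_gt hε0
    have hne2 : lam ε ≠ 0 := ne_of_gt hlam
    have hne3 : fwB C₀ C₃ lam ε ≠ 0 := ne_of_gt hB0
    have hne4 : Real.exp (2*C₀*lam ε) ≠ 0 := (Real.exp_pos _).ne'
    have hne5 : (C₂+C₃*ε) ≠ 0 := by positivity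
    show Real.exp (-(2*C₀)) * (1-ε/lam ε) * (fwB C₀ C₃ lam ε / lam ε) *
          (Real.exp (2*C₀*lam ε) * (C₂+C₃*ε))⁻¹
        = ε * fwXp C₀ C₂ C₃ lam ε / lam ε
    unfold fwXp
    field_simp
end

section
/- Let T̂, T̂₂, T̃, T̃₂ be positive integer-valued random variables with finite expectation such that the i.i.d. interarrival sums define renewal processes P̂_N = max{K : Σ_{k≤K}(T̂_{2k−1}+T̂_{2k}) ≤ N} and similarly P̃_N, and suppose P̂_N − 1 ≤ θ_N/π ≤ P̃_N + 1 almost surely for all N. Then 1/(E(T̂₁)+E(T̂₂)) ≤ lim_{N→∞} E(θ_N)/(πN) ≤ 1/(E(T̃₁)+E(T̃₂)). -/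
set_option maxHeartbeats 1000000

open MeasureTheory ProbabilityTheory Real Filter Topology

namespace RenewalAux1

lemma pointwise (x : ℕ → ℕ) (hx : ∀ k, 1 ≤ x k) {E : ℝ} (hE : 0 < E)
    (hS : Tendsto (fun K : ℕ => ((∑ k ∈ Finset.range K, x k : ℕ) : ℝ) / K) atTop (𝓝 E)) :
    Tendsto (fun N : ℕ => ((sSup {K : ℕ | ∑ k ∈ Finset.range K, x k ≤ N} : ℕ) : ℝ) / N)
      atTop (𝓝 (1 / E)) := by
  set S : ℕ → ℕ := fun K => ∑ k ∈ Finset.range K, x k with hSdef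
  have hKS : ∀ K, K ≤ S K := by
    intro K
    calc K = ∑ _k ∈ Finset.range K, 1 := by simp
    _ ≤ S K := Finset.sum_le_sum fun k _ => hx k
  set p : ℕ → ℕ := fun N => sSup {K | S K ≤ N} with hpdef
  have hbdd : ∀ N, BddAbove {K | S K ≤ N} := fun N => ⟨N, fun K hK => le_trans (hKS K) hK⟩
  have hmem : ∀ N, S (p N) ≤ N := fun N => Nat.sSup_mem ⟨0, by simp [S]⟩ (hbdd N)
  have hle : ∀ N K, S K ≤ N → K ≤ p N := fun N K h => le_csSup (hbdd N) h
  have hpN : ∀ N, p N ≤ N := fun N => le_trans (hKS _) (hmem N)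
  have hgt : ∀ N, N < S (p N + 1) := by
    intro N; by_contra h; push_neg at h
    have := hle N _ h; omega
  have hptop : Tendsto p atTop atTop :=
    tendsto_atTop_atTop.2 fun b => ⟨S b, fun N hN => hle N b hN⟩
  have hp1top : Tendsto (fun N => p N + 1) atTop atTop :=
    tendsto_atTop_atTop.2 fun b => ⟨S b, fun N hN => le_trans (hle N b hN) (Nat.le_succ _)⟩
  -- N / p N → E
  have hlow : Tendsto (fun N => (S (p N) : ℝ) / (p N : ℝ)) atTop (𝓝 E) := hS.comp hptop
  have hup1 : Tendsto (fun N => (S (p N + 1) : ℝ) / ((p N : ℝ) + 1)) atTop (𝓝 E) := by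
    have h := hS.comp hp1top
    simp only [Function.comp_def, Nat.cast_add, Nat.cast_one] at h
    exact h
  have hratio : Tendsto (fun N => 1 + ((p N : ℝ))⁻¹) atTop (𝓝 (1 + 0)) :=
    tendsto_const_nhds.add (tendsto_natCast_atTop_atTop.comp hptop).inv_tendsto_atTop
  have hup : Tendsto (fun N => ((S (p N + 1) : ℝ) / ((p N : ℝ) + 1)) * (1 + ((p N : ℝ))⁻¹))
      atTop (𝓝 E) := by
    have := hup1.mul hratio
    simpa using this
  have hev : ∀ᶠ N in atTop, 1 ≤ p N := hptop.eventually_ge_atTop 1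
  have hmid : Tendsto (fun N : ℕ => (N : ℝ) / (p N : ℝ)) atTop (𝓝 E) := by
    apply tendsto_of_tendsto_of_tendsto_of_le_of_le' hlow hup
    · filter_upwards [hev] with N hN
      have h0 : (0 : ℝ) < (p N : ℝ) := by exact_mod_cast hN
      gcongr
      exact_mod_cast hmem N
    · filter_upwards [hev] with N hN
      have h0 : (0 : ℝ) < (p N : ℝ) := by exact_mod_cast hN
      have heq : ((S (p N + 1) : ℝ) / ((p N : ℝ) + 1)) * (1 + ((p N : ℝ))⁻¹)
          = (S (p N + 1) : ℝ) / (p N : ℝ) := by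
        have h1 : ((p N : ℝ) + 1) ≠ 0 := by positivity
        field_simp
      rw [heq]
      gcongr
      have := hgt N
      exact_mod_cast this.le
  have : Tendsto (fun N : ℕ => ((N : ℝ) / (p N : ℝ))⁻¹) atTop (𝓝 E⁻¹) := hmid.inv₀ hE.ne'
  have heq : (fun N : ℕ => (p N : ℝ) / (N : ℝ)) = fun N : ℕ => ((N : ℝ) / (p N : ℝ))⁻¹ := by
    funext N; rw [inv_div]
  rw [one_div]
  rw [heq]
  exact this


lemma Q_eq (x : ℕ → ℕ) (hx : ∀ k, 1 ≤ x k) (N : ℕ) :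
    (∑ K ∈ Finset.range N, if ∑ k ∈ Finset.range (K + 1), x k ≤ N then 1 else 0) =
      sSup {K : ℕ | ∑ k ∈ Finset.range K, x k ≤ N} := by
  set S : ℕ → ℕ := fun K => ∑ k ∈ Finset.range K, x k with hSdef
  have hKS : ∀ K, K ≤ S K := by
    intro K
    calc K = ∑ _k ∈ Finset.range K, 1 := by simp
    _ ≤ S K := Finset.sum_le_sum fun k _ => hx k
  have hmono : Monotone S := fun a b hab =>
    Finset.sum_le_sum_of_subset (Finset.range_subset_range.2 hab)
  set p : ℕ → ℕ := fun N => sSup {K | S K ≤ N} with hpdef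
  have hbdd : ∀ N, BddAbove {K | S K ≤ N} := fun N => ⟨N, fun K hK => le_trans (hKS K) hK⟩
  have hmem : ∀ N, S (p N) ≤ N := fun N => Nat.sSup_mem ⟨0, by simp [S]⟩ (hbdd N)
  have hle : ∀ N K, S K ≤ N → K ≤ p N := fun N K h => le_csSup (hbdd N) h
  have hpN : ∀ N, p N ≤ N := fun N => le_trans (hKS _) (hmem N)
  have key : ∀ K, (S (K + 1) ≤ N ↔ K + 1 ≤ p N) := by
    intro K
    constructor
    · exact hle N (K + 1)
    · intro h; exact le_trans (hmono h) (hmem N)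
  calc (∑ K ∈ Finset.range N, if S (K + 1) ≤ N then 1 else 0)
      = ∑ K ∈ Finset.range N, if K < p N then 1 else 0 := by
        refine Finset.sum_congr rfl fun K _ => ?_
        simp only [key K, Nat.lt_iff_add_one_le]
    _ = p N := by
        rw [Finset.sum_boole]
        have : Finset.filter (fun K => K < p N) (Finset.range N) = Finset.range (p N) := by
          ext K
          simp only [Finset.mem_filter, Finset.mem_range]
          have := hpN N
          omega
        rw [this, Finset.card_range, Nat.cast_id]


lemma sSup_le (x : ℕ → ℕ) (hx : ∀ k, 1 ≤ x k) (N : ℕ) :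
    sSup {K : ℕ | ∑ k ∈ Finset.range K, x k ≤ N} ≤ N := by
  have hKS : ∀ K, K ≤ ∑ k ∈ Finset.range K, x k := by
    intro K
    calc K = ∑ _k ∈ Finset.range K, 1 := by simp
    _ ≤ _ := Finset.sum_le_sum fun k _ => hx k
  have hbdd : BddAbove {K | ∑ k ∈ Finset.range K, x k ≤ N} :=
    ⟨N, fun K hK => le_trans (hKS K) hK⟩
  exact le_trans (hKS _) (Nat.sSup_mem ⟨0, by simp⟩ hbdd)

section Integral
variable {Ω : Type*} [MeasurableSpace Ω] (μ : Measure Ω) [IsProbabilityMeasure μ]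

lemma aesm (X : ℕ → Ω → ℕ) (hmeas : ∀ k, Measurable (X k))
    (hpos : ∀ᵐ ω ∂μ, ∀ k, 1 ≤ X k ω) (N : ℕ) :
    AEStronglyMeasurable
      (fun ω => ((sSup {K : ℕ | ∑ k ∈ Finset.range K, X k ω ≤ N} : ℕ) : ℝ) / N) μ := by
  have hQ : Measurable (fun ω =>
      ((∑ K ∈ Finset.range N, if ∑ k ∈ Finset.range (K + 1), X k ω ≤ N then 1 else 0 : ℕ) : ℝ) / N) := by
    apply Measurable.div_const
    apply Measurable.comp (measurable_from_nat (f := fun n : ℕ => (n : ℝ)))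
    apply Finset.measurable_sum
    intro K _
    refine Measurable.ite ?_ measurable_const measurable_const
    have hS : Measurable (fun ω => ∑ k ∈ Finset.range (K + 1), X k ω) :=
      Finset.measurable_sum _ fun k _ => hmeas k
    exact hS (measurableSet_le measurable_id measurable_const)
  refine hQ.aestronglyMeasurable.congr ?_
  filter_upwards [hpos] with ω h1
  rw [Q_eq (fun k => X k ω) h1 N]

lemma integrable_P (X : ℕ → Ω → ℕ) (hmeas : ∀ k, Measurable (X k))
    (hpos : ∀ᵐ ω ∂μ, ∀ k, 1 ≤ X k ω) (N : ℕ) :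
    Integrable
      (fun ω => ((sSup {K : ℕ | ∑ k ∈ Finset.range K, X k ω ≤ N} : ℕ) : ℝ) / N) μ := by
  refine Integrable.mono' (integrable_const 1) (aesm μ X hmeas hpos N) ?_
  filter_upwards [hpos] with ω h1
  rw [Real.norm_eq_abs, abs_div, abs_of_nonneg (by positivity), Nat.abs_cast]
  rcases Nat.eq_zero_or_pos N with h | h
  · simp [h]
  · rw [div_le_one (by exact_mod_cast h)]
    exact_mod_cast sSup_le (fun k => X k ω) h1 N

lemma integral_tendsto (X : ℕ → Ω → ℕ) (hmeas : ∀ k, Measurable (X k))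
    (hpos : ∀ k, ∀ᵐ ω ∂μ, 1 ≤ X k ω)
    (hint : Integrable (fun ω => (X 0 ω : ℝ)) μ)
    (hindep : iIndepFun X μ)
    (hident : ∀ k, IdentDistrib (X k) (X 0) μ μ) :
    Tendsto (fun N : ℕ =>
        ∫ ω, ((sSup {K : ℕ | ∑ k ∈ Finset.range K, X k ω ≤ N} : ℕ) : ℝ) / N ∂μ)
      atTop (𝓝 (1 / ∫ ω, (X 0 ω : ℝ) ∂μ)) := by
  set E := ∫ ω, (X 0 ω : ℝ) ∂μ with hEdef
  have hE1 : (1 : ℝ) ≤ E := by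
    have h := integral_mono_ae (integrable_const (1 : ℝ)) hint
      ((hpos 0).mono fun ω h => show (1 : ℝ) ≤ (X 0 ω : ℝ) by exact_mod_cast h)
    simpa using h
  have hE : 0 < E := lt_of_lt_of_le one_pos hE1
  have hcast : Measurable (fun n : ℕ => (n : ℝ)) := measurable_from_nat
  have hslln : ∀ᵐ ω ∂μ, Tendsto (fun n : ℕ => (∑ i ∈ Finset.range n, (X i ω : ℝ)) / n)
      atTop (𝓝 E) := by
    apply strong_law_ae_real (fun k ω => (X k ω : ℝ)) hint
    · intro i j hij
      exact ((hindep.indepFun hij).comp hcast hcast : _)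
    · intro i
      exact (hident i).comp hcast
  have hposall : ∀ᵐ ω ∂μ, ∀ k, 1 ≤ X k ω := ae_all_iff.2 hpos
  have hptwise : ∀ᵐ ω ∂μ, Tendsto (fun N : ℕ =>
      ((sSup {K : ℕ | ∑ k ∈ Finset.range K, X k ω ≤ N} : ℕ) : ℝ) / N) atTop (𝓝 (1 / E)) := by
    filter_upwards [hposall, hslln] with ω h1 h2
    apply pointwise (fun k => X k ω) h1 hE
    have h2' : Tendsto (fun n : ℕ => ((∑ i ∈ Finset.range n, X i ω : ℕ) : ℝ) / n)
        atTop (𝓝 E) := by simpa [Nat.cast_sum] using h2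
    exact h2'
  have := tendsto_integral_of_dominated_convergence (μ := μ)
    (F := fun N ω => ((sSup {K : ℕ | ∑ k ∈ Finset.range K, X k ω ≤ N} : ℕ) : ℝ) / N)
    (f := fun _ => 1 / E) (fun _ => 1)
    (fun N => aesm μ X hmeas hposall N) (integrable_const 1) ?_ hptwise
  · simpa using this
  · intro N
    filter_upwards [hposall] with ω h1
    rw [Real.norm_eq_abs, abs_div, abs_of_nonneg (by positivity), Nat.abs_cast]
    rcases Nat.eq_zero_or_pos N with h | h
    · simp [h]
    · rw [div_le_one (by exact_mod_cast h)]
      exact_mod_cast sSup_le (fun k => X k ω) h1 N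


end Integral

end RenewalAux1

/-- Renewal-theoretic sandwich for the rotation number: if the renewal counting
processes of the slower and faster passage times sandwich `θ_N/π`, then the rotation
number `lim_N E(θ_N)/(πN)` is sandwiched by the inverses of the expected interarrival
times. -/
theorem renewal_sandwich_rotation_number
    {Ω : Type*} [MeasurableSpace Ω] (μ : Measure Ω) [IsProbabilityMeasure μ]
    (Th Tt : ℕ → Ω → ℕ) (θ : ℕ → Ω → ℝ)
    (hThmeas : ∀ k, Measurable (Th k)) (hTtmeas : ∀ k, Measurable (Tt k))
    (hθmeas : ∀ N, Measurable (θ N))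
    (hThpos : ∀ k, ∀ᵐ ω ∂μ, 0 < Th k ω) (hTtpos : ∀ k, ∀ᵐ ω ∂μ, 0 < Tt k ω)
    (hThint : ∀ k, Integrable (fun ω => (Th k ω : ℝ)) μ)
    (hTtint : ∀ k, Integrable (fun ω => (Tt k ω : ℝ)) μ)
    (hθint : ∀ N, Integrable (θ N) μ)
    -- the interarrival times are i.i.d.
    (hindep_h : iIndepFun
      (fun k ω => Th (2 * k) ω + Th (2 * k + 1) ω) μ)
    (hident_h : ∀ k, IdentDistrib (fun ω => Th (2 * k) ω + Th (2 * k + 1) ω)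
      (fun ω => Th 0 ω + Th 1 ω) μ μ)
    (hindep_t : iIndepFun
      (fun k ω => Tt (2 * k) ω + Tt (2 * k + 1) ω) μ)
    (hident_t : ∀ k, IdentDistrib (fun ω => Tt (2 * k) ω + Tt (2 * k + 1) ω)
      (fun ω => Tt 0 ω + Tt 1 ω) μ μ)
    -- the renewal counting processes sandwich θ_N/π
    (hsandwich : ∀ N : ℕ, ∀ᵐ ω ∂μ,
      ((sSup {K : ℕ | ∑ k ∈ Finset.range K, (Th (2 * k) ω + Th (2 * k + 1) ω) ≤ N} : ℕ) : ℝ)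
          - 1 ≤ θ N ω / Real.pi ∧
      θ N ω / Real.pi ≤
        ((sSup {K : ℕ | ∑ k ∈ Finset.range K, (Tt (2 * k) ω + Tt (2 * k + 1) ω) ≤ N} : ℕ) : ℝ)
          + 1)
    (ℓ : ℝ)
    (hlim : Tendsto (fun N : ℕ => (∫ ω, θ N ω ∂μ) / (Real.pi * N)) atTop (𝓝 ℓ)) :
    1 / ((∫ ω, (Th 0 ω : ℝ) ∂μ) + ∫ ω, (Th 1 ω : ℝ) ∂μ) ≤ ℓ ∧
    ℓ ≤ 1 / ((∫ ω, (Tt 0 ω : ℝ) ∂μ) + ∫ ω, (Tt 1 ω : ℝ) ∂μ) := by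
  have hπ : (0 : ℝ) < Real.pi := Real.pi_pos
  -- prepare for both processes
  set Xh : ℕ → Ω → ℕ := fun k ω => Th (2 * k) ω + Th (2 * k + 1) ω with hXh
  set Xt : ℕ → Ω → ℕ := fun k ω => Tt (2 * k) ω + Tt (2 * k + 1) ω with hXt
  have hXhmeas : ∀ k, Measurable (Xh k) := fun k => (hThmeas _).add (hThmeas _)
  have hXtmeas : ∀ k, Measurable (Xt k) := fun k => (hTtmeas _).add (hTtmeas _)
  have hXhpos : ∀ k, ∀ᵐ ω ∂μ, 1 ≤ Xh k ω := fun k =>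
    (hThpos (2 * k)).mono fun ω h => by simp only [Xh]; omega
  have hXtpos : ∀ k, ∀ᵐ ω ∂μ, 1 ≤ Xt k ω := fun k =>
    (hTtpos (2 * k)).mono fun ω h => by simp only [Xt]; omega
  have hXhint : Integrable (fun ω => (Xh 0 ω : ℝ)) μ := by
    have : (fun ω => (Xh 0 ω : ℝ)) = fun ω => (Th 0 ω : ℝ) + (Th 1 ω : ℝ) := by
      funext ω; simp only [Xh]; norm_num
    rw [this]; exact (hThint 0).add (hThint 1)
  have hXtint : Integrable (fun ω => (Xt 0 ω : ℝ)) μ := by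
    have : (fun ω => (Xt 0 ω : ℝ)) = fun ω => (Tt 0 ω : ℝ) + (Tt 1 ω : ℝ) := by
      funext ω; simp only [Xt]; norm_num
    rw [this]; exact (hTtint 0).add (hTtint 1)
  have hEh : ∫ ω, (Xh 0 ω : ℝ) ∂μ = (∫ ω, (Th 0 ω : ℝ) ∂μ) + ∫ ω, (Th 1 ω : ℝ) ∂μ := by
    rw [show (fun ω => (Xh 0 ω : ℝ)) = fun ω => (Th 0 ω : ℝ) + (Th 1 ω : ℝ) by
      funext ω; simp only [Xh]; norm_num]
    exact integral_add (hThint 0) (hThint 1)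
  have hEt : ∫ ω, (Xt 0 ω : ℝ) ∂μ = (∫ ω, (Tt 0 ω : ℝ) ∂μ) + ∫ ω, (Tt 1 ω : ℝ) ∂μ := by
    rw [show (fun ω => (Xt 0 ω : ℝ)) = fun ω => (Tt 0 ω : ℝ) + (Tt 1 ω : ℝ) by
      funext ω; simp only [Xt]; norm_num]
    exact integral_add (hTtint 0) (hTtint 1)
  have hidenth : ∀ k, IdentDistrib (Xh k) (Xh 0) μ μ := by
    intro k
    refine (hident_h k).trans ?_
    have : Xh 0 = fun ω => Th 0 ω + Th 1 ω := rfl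
    rw [this]
    exact IdentDistrib.refl ((hThmeas 0).add (hThmeas 1)).aemeasurable
  have hidentt : ∀ k, IdentDistrib (Xt k) (Xt 0) μ μ := by
    intro k
    refine (hident_t k).trans ?_
    have : Xt 0 = fun ω => Tt 0 ω + Tt 1 ω := rfl
    rw [this]
    exact IdentDistrib.refl ((hTtmeas 0).add (hTtmeas 1)).aemeasurable
  have hTendh := RenewalAux1.integral_tendsto μ Xh hXhmeas hXhpos hXhint hindep_h hidenth
  have hTendt := RenewalAux1.integral_tendsto μ Xt hXtmeas hXtpos hXtint hindep_t hidentt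
  rw [hEh] at hTendh
  rw [hEt] at hTendt
  have hposallh : ∀ᵐ ω ∂μ, ∀ k, 1 ≤ Xh k ω := ae_all_iff.2 hXhpos
  have hposallt : ∀ᵐ ω ∂μ, ∀ k, 1 ≤ Xt k ω := ae_all_iff.2 hXtpos
  have hzero : Tendsto (fun N : ℕ => 1 / (N : ℝ)) atTop (𝓝 0) :=
    tendsto_one_div_atTop_nhds_zero_nat
  constructor
  · -- lower bound
    have hTend : Tendsto (fun N : ℕ =>
        (∫ ω, ((sSup {K : ℕ | ∑ k ∈ Finset.range K, Xh k ω ≤ N} : ℕ) : ℝ) / N ∂μ) - 1 / N)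
        atTop (𝓝 (1 / ((∫ ω, (Th 0 ω : ℝ) ∂μ) + ∫ ω, (Th 1 ω : ℝ) ∂μ))) := by
      simpa using hTendh.sub hzero
    refine le_of_tendsto_of_tendsto hTend hlim ?_
    filter_upwards [eventually_ge_atTop 1] with N hN
    have hNpos : (0 : ℝ) < N := by exact_mod_cast hN
    have key : ∫ ω, (((sSup {K : ℕ | ∑ k ∈ Finset.range K, Xh k ω ≤ N} : ℕ) : ℝ) / N - 1 / N) ∂μ
        ≤ ∫ ω, θ N ω / (Real.pi * N) ∂μ := by
      refine integral_mono_ae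
        ((RenewalAux1.integrable_P μ Xh hXhmeas hposallh N).sub (integrable_const _))
        ((hθint N).div_const _) ?_
      filter_upwards [hsandwich N] with ω hs
      have h1 := hs.1
      have : (((sSup {K : ℕ | ∑ k ∈ Finset.range K, Xh k ω ≤ N} : ℕ) : ℝ) - 1) / N
          ≤ (θ N ω / Real.pi) / N := by gcongr
      calc ((sSup {K : ℕ | ∑ k ∈ Finset.range K, Xh k ω ≤ N} : ℕ) : ℝ) / N - 1 / N
          = (((sSup {K : ℕ | ∑ k ∈ Finset.range K, Xh k ω ≤ N} : ℕ) : ℝ) - 1) / N := by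
            rw [sub_div]
        _ ≤ (θ N ω / Real.pi) / N := this
        _ = θ N ω / (Real.pi * N) := by rw [div_div]
    rw [integral_sub (RenewalAux1.integrable_P μ Xh hXhmeas hposallh N)
      (integrable_const _), integral_const, integral_div, integral_div] at key
    simp only [measure_univ, probReal_univ, ENNReal.toReal_one, one_smul, smul_eq_mul, one_mul] at key
    rw [integral_div]
    exact key
  · -- upper bound
    have hTend : Tendsto (fun N : ℕ =>
        (∫ ω, ((sSup {K : ℕ | ∑ k ∈ Finset.range K, Xt k ω ≤ N} : ℕ) : ℝ) / N ∂μ) + 1 / N)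
        atTop (𝓝 (1 / ((∫ ω, (Tt 0 ω : ℝ) ∂μ) + ∫ ω, (Tt 1 ω : ℝ) ∂μ))) := by
      simpa using hTendt.add hzero
    refine le_of_tendsto_of_tendsto hlim hTend ?_
    filter_upwards [eventually_ge_atTop 1] with N hN
    have hNpos : (0 : ℝ) < N := by exact_mod_cast hN
    have key : ∫ ω, θ N ω / (Real.pi * N) ∂μ
        ≤ ∫ ω, (((sSup {K : ℕ | ∑ k ∈ Finset.range K, Xt k ω ≤ N} : ℕ) : ℝ) / N + 1 / N) ∂μ := by
      refine integral_mono_ae ((hθint N).div_const _)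
        ((RenewalAux1.integrable_P μ Xt hXtmeas hposallt N).add (integrable_const _)) ?_
      filter_upwards [hsandwich N] with ω hs
      have h1 := hs.2
      have : (θ N ω / Real.pi) / N
          ≤ (((sSup {K : ℕ | ∑ k ∈ Finset.range K, Xt k ω ≤ N} : ℕ) : ℝ) + 1) / N := by gcongr
      calc θ N ω / (Real.pi * N) = (θ N ω / Real.pi) / N := by rw [div_div]
        _ ≤ (((sSup {K : ℕ | ∑ k ∈ Finset.range K, Xt k ω ≤ N} : ℕ) : ℝ) + 1) / N := this
        _ = ((sSup {K : ℕ | ∑ k ∈ Finset.range K, Xt k ω ≤ N} : ℕ) : ℝ) / N + 1 / N := by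
            rw [add_div]
    rw [integral_add (RenewalAux1.integrable_P μ Xt hXtmeas hposallt N)
      (integrable_const _), integral_const, integral_div, integral_div] at key
    simp only [measure_univ, probReal_univ, ENNReal.toReal_one, one_smul, smul_eq_mul, one_mul] at key
    rw [integral_div]
    exact key
end
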